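/- arXiv:1103.2610 — 4 statements merged into one kernel-verified Lean document; each statement's English description precedes it below -/
import Mathlib

section
/- The exponential generating function identity ∑_{n≥0} F_n(s) z^n/n! = -e^z · ∑_{n≥0} F_n(s) (-z)^n/n! holds as an identity of formal power series in z with coefficients polynomials in s. -/
/-!
In any `ℚ[s]`-algebra, `x ^ 2 = x + s` implies `x ^ (n + 1) = F (n + 1) • x + (s * F n) • 1`, and the
relation is preserved by `x ↦ 1 - x`. For `M = !![1, 1; s, 0]` both `M ^ n` and `(1 - M) ^ n`
therefore carry `± F n` in entry `(0, 1)`; expanding `(1 - M) ^ n` binomially gives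
`∑ k, (n.choose k) (-1) ^ k F k = -F n`, which is the coefficientwise form of the identity, since
the product of two exponential generating functions is the one of the binomial convolution.
-/

open Polynomial PowerSeries

/-- Fibonacci polynomials: F 0 = 0, F 1 = 1, F (n+2) = F (n+1) + X * F n. -/
noncomputable def fibPoly : ℕ → Polynomial ℚ
  | 0 => 0
  | 1 => 1
  | n + 2 => fibPoly (n + 1) + Polynomial.X * fibPoly n

open Finset Nat

noncomputable def egf {S : Type*} [Semiring S] [Algebra ℚ S] (a : ℕ → S) : S⟦X⟧ :=
  mk fun n => (n ! : ℚ)⁻¹ • a n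

theorem egf_mul_egf {S : Type*} [Semiring S] [Algebra ℚ S] (a b : ℕ → S) :
    egf a * egf b = egf fun n => ∑ p ∈ antidiagonal n, n.choose p.1 • (a p.1 * b p.2) := by
  ext n
  rw [PowerSeries.coeff_mul]
  simp only [egf, coeff_mk, smul_sum]
  refine sum_congr rfl fun p hp => ?_
  obtain rfl := mem_antidiagonal.mp hp
  have hfact : ((p.1 + p.2) ! : ℚ)⁻¹ * (p.1 + p.2).choose p.1 =
      (p.1 ! : ℚ)⁻¹ * (p.2 ! : ℚ)⁻¹ := by
    rw [Nat.choose_symm_add]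
    field_simp
    exact_mod_cast Nat.add_choose_mul_factorial_mul_factorial p.1 p.2
  rw [smul_mul_smul_comm, ← Nat.cast_smul_eq_nsmul ℚ, smul_smul, hfact]

theorem pow_succ_eq_fibPoly_smul {A : Type*} [Ring A] [Algebra ℚ[X] A] {x : A}
    (hx : x ^ 2 = x + algebraMap ℚ[X] A Polynomial.X) (n : ℕ) :
    x ^ (n + 1) = fibPoly (n + 1) • x + (Polynomial.X * fibPoly n) • 1 := by
  induction n with
  | zero => simp [fibPoly]
  | succ n ih =>
    rw [pow_succ, ih, add_mul, smul_mul_assoc, ← sq, hx, smul_mul_assoc, one_mul,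
      Algebra.algebraMap_eq_smul_one, fibPoly]
    module

theorem one_sub_sq_of_sq_eq_add {R : Type*} [Ring R] {x c : R} (hx : x ^ 2 = x + c) :
    (1 - x) ^ 2 = (1 - x) + c :=
  calc (1 - x) ^ 2 = 1 - x - x + x ^ 2 := by noncomm_ring
    _ = (1 - x) + c := by rw [hx]; abel

noncomputable def fibMatrix : Matrix (Fin 2) (Fin 2) ℚ[X] := !![1, 1; Polynomial.X, 0]

theorem fibMatrix_sq : fibMatrix ^ 2 = fibMatrix + algebraMap ℚ[X] _ Polynomial.X := by
  ext i j; fin_cases i <;> fin_cases j <;> simp [fibMatrix, sq, Matrix.algebraMap_matrix_apply]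

theorem fibMatrix_pow_apply_zero_one (n : ℕ) : (fibMatrix ^ n) 0 1 = fibPoly n := by
  cases n with
  | zero => simp [fibPoly]
  | succ n => rw [pow_succ_eq_fibPoly_smul fibMatrix_sq]; simp [fibMatrix]

theorem one_sub_fibMatrix_pow_apply_zero_one (n : ℕ) :
    ((1 - fibMatrix) ^ n) 0 1 = -fibPoly n := by
  cases n with
  | zero => simp [fibPoly]
  | succ n =>
    rw [pow_succ_eq_fibPoly_smul (one_sub_sq_of_sq_eq_add fibMatrix_sq)]
    simp [fibMatrix]

theorem sum_choose_smul_neg_one_pow_smul_fibPoly (n : ℕ) :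
    ∑ p ∈ antidiagonal n, n.choose p.1 • ((-1 : ℚ) ^ p.2 • fibPoly p.2) = -fibPoly n := by
  rw [← one_sub_fibMatrix_pow_apply_zero_one, sub_eq_add_neg, ← neg_one_smul ℚ fibMatrix,
    (Commute.one_left _).add_pow', Matrix.sum_apply]
  simp only [one_pow, one_mul, _root_.smul_pow, Matrix.smul_apply, fibMatrix_pow_apply_zero_one]

/-- ∑_{n≥0} F_n(s) z^n/n! = -e^z · ∑_{n≥0} F_n(s) (-z)^n/n!
as formal power series in z with coefficients in ℚ[s]. -/
theorem fib_egf_identity :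
    PowerSeries.mk (fun n => ((n.factorial : ℚ)⁻¹) • fibPoly n) =
      -(PowerSeries.mk (fun n => ((n.factorial : ℚ)⁻¹) • (1 : Polynomial ℚ))) *
        PowerSeries.mk (fun n => ((-1 : ℚ) ^ n * (n.factorial : ℚ)⁻¹) • fibPoly n) := by
  have hsigned : PowerSeries.mk (fun n => ((-1 : ℚ) ^ n * (n.factorial : ℚ)⁻¹) • fibPoly n)
      = egf fun n => (-1 : ℚ) ^ n • fibPoly n := by
    simp only [egf, mul_comm ((-1 : ℚ) ^ _), mul_smul]
  change egf fibPoly = -egf 1 * _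
  rw [hsigned, neg_mul, egf_mul_egf]
  ext n
  simp only [egf, coeff_mk, map_neg, Pi.one_apply, one_mul,
    sum_choose_smul_neg_one_pow_smul_fibPoly, smul_neg, neg_neg]
end

section
/- For all n, k: ∑_{j=0}^{n} C(n+1,j)·S(j,k) = (k+1)·S(n+1, k+1), where S(n,k) are the Stirling numbers of the second kind. -/
/-- Stirling numbers of the second kind. -/
def stirling2 : ℕ → ℕ → ℕ
  | 0, 0 => 1
  | 0, _ + 1 => 0
  | _ + 1, 0 => 0
  | n + 1, k + 1 => stirling2 n k + (k + 1) * stirling2 n (k + 1)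

lemma stirling2_succ_zero (n : ℕ) : stirling2 (n + 1) 0 = 0 := rfl

lemma sum_choose_stirling2 (n : ℕ) :
    ∀ k, ∑ j ∈ Finset.range (n + 1), n.choose j * stirling2 j k =
      stirling2 (n + 1) (k + 1) := by
  induction n with
  | zero =>
    intro k
    cases k <;> simp [stirling2]
  | succ n ih =>
    intro k
    show ∑ j ∈ Finset.range (n + 2), (n + 1).choose j * stirling2 j k = stirling2 (n + 2) (k + 1)
    have split : ∑ j ∈ Finset.range (n + 2), (n + 1).choose j * stirling2 j k =
        (∑ j ∈ Finset.range (n + 1), n.choose j * stirling2 j k) +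
          ∑ i ∈ Finset.range (n + 1), n.choose i * stirling2 (i + 1) k := by
      rw [Finset.sum_range_succ' _ (n + 1)]
      have h1 : ∀ i, (n + 1).choose (i + 1) * stirling2 (i + 1) k =
          n.choose i * stirling2 (i + 1) k + n.choose (i + 1) * stirling2 (i + 1) k := by
        intro i
        rw [Nat.choose_succ_succ, Nat.add_mul]
      simp only [h1]
      rw [Finset.sum_add_distrib]
      have h2 : (∑ i ∈ Finset.range (n + 1), n.choose (i + 1) * stirling2 (i + 1) k) +
          (n + 1).choose 0 * stirling2 0 k =
          ∑ j ∈ Finset.range (n + 2), n.choose j * stirling2 j k := by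
        rw [Finset.sum_range_succ' _ (n + 1)]
        simp
      have h3 : ∑ j ∈ Finset.range (n + 2), n.choose j * stirling2 j k =
          ∑ j ∈ Finset.range (n + 1), n.choose j * stirling2 j k := by
        rw [Finset.sum_range_succ]
        simp [Nat.choose_succ_self]
      omega
    rw [split, ih k]
    cases k with
    | zero =>
      have : ∑ i ∈ Finset.range (n + 1), n.choose i * stirling2 (i + 1) 0 = 0 := by
        apply Finset.sum_eq_zero
        intro i _
        simp [stirling2_succ_zero]
      rw [this]
      show stirling2 (n + 1) 1 + 0 = stirling2 (n + 2) 1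
      simp [stirling2]
    | succ k =>
      have : ∑ i ∈ Finset.range (n + 1), n.choose i * stirling2 (i + 1) (k + 1) =
          (∑ i ∈ Finset.range (n + 1), n.choose i * stirling2 i k) +
            (k + 1) * ∑ i ∈ Finset.range (n + 1), n.choose i * stirling2 i (k + 1) := by
        rw [Finset.mul_sum, ← Finset.sum_add_distrib]
        apply Finset.sum_congr rfl
        intro i _
        show n.choose i * stirling2 (i + 1) (k + 1) = _
        rw [show stirling2 (i + 1) (k + 1) = stirling2 i k + (k + 1) * stirling2 i (k + 1) from rfl]
        ring
      rw [this, ih k, ih (k + 1)]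
      show _ = stirling2 (n + 2) (k + 2)
      rw [show stirling2 (n + 2) (k + 2) =
          stirling2 (n + 1) (k + 1) + (k + 2) * stirling2 (n + 1) (k + 2) from rfl]
      ring

theorem sum_choose_succ_stirling2 (n k : ℕ) :
    ∑ j ∈ Finset.range (n + 1), (n + 1).choose j * stirling2 j k =
      (k + 1) * stirling2 (n + 1) (k + 1) := by
  have h := sum_choose_stirling2 (n + 1) k
  rw [Finset.sum_range_succ] at h
  simp only [Nat.choose_self, one_mul] at h
  have hrec : stirling2 (n + 1 + 1) (k + 1) =
      stirling2 (n + 1) k + (k + 1) * stirling2 (n + 1) (k + 1) := rfl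
  omega
end

section
/- For all n ≥ 0 and 0 ≤ k ≤ n: ∑_{j=k}^{n} C(n+1, 2n-2j)·C(2j+1-k, k) = ∑_{j=k}^{n} C(n+1, 2n-2j+1)·C(2j-k, k). -/
private lemma rrec (m x k : ℕ) :
    ∑ i ∈ Finset.range (m+2), (-1:ℤ)^i * ((m+1).choose i) * ((x-i).choose k)
      = ∑ i ∈ Finset.range (m+1), (-1:ℤ)^i * (m.choose i) * ((x-i).choose k)
        - ∑ i ∈ Finset.range (m+1), (-1:ℤ)^i * (m.choose i) * ((x-1-i).choose k) := by
  set f : ℕ → ℤ := fun i => (-1:ℤ)^i * (m.choose i) * ((x-i).choose k) with hf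
  have h1 : ∀ i ∈ Finset.range (m+1),
      (-1:ℤ)^(i+1) * (((m+1).choose (i+1) : ℤ)) * (((x-(i+1)).choose k : ℤ))
        = -((-1:ℤ)^i * (m.choose i) * ((x-1-i).choose k)) + f (i+1) := by
    intro i hi
    simp only [hf]
    rw [Nat.choose_succ_succ]
    have h2 : x - (i+1) = x - 1 - i := by omega
    rw [h2]
    push_cast
    ring
  rw [Finset.sum_range_succ' (fun i => (-1:ℤ)^i * ((m+1).choose i) * ((x-i).choose k)) (m+1)]
  rw [Finset.sum_congr rfl h1, Finset.sum_add_distrib]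
  have h4 := Finset.sum_range_succ' f (m+1)
  have h5 := Finset.sum_range_succ f (m+1)
  have h6 : f (m+1) = 0 := by simp [hf, Nat.choose_succ_self]
  have h8 : ∑ i ∈ Finset.range (m+1), f (i+1)
      = ∑ i ∈ Finset.range (m+1), f i - f 0 := by
    rw [h6, add_zero] at h5; rw [h5] at h4; linarith
  rw [h8]
  simp only [Finset.sum_neg_distrib]
  have : (-1:ℤ)^0 * (((m+1).choose 0 : ℤ)) * (((x-0).choose k : ℤ)) = f 0 := by simp [hf]
  rw [this]
  ring

private lemma diff_le (m : ℕ) : ∀ x k : ℕ, m ≤ x → m ≤ k →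
    ∑ i ∈ Finset.range (m+1), (-1:ℤ)^i * (m.choose i) * ((x-i).choose k)
      = ((x-m).choose (k-m) : ℤ) := by
  induction m with
  | zero => intro x k _ _; simp
  | succ m ih =>
    intro x k hx hkm
    rw [rrec m x k, ih x k (by omega) (by omega), ih (x-1) k (by omega) (by omega)]
    have e1 : x - 1 - m = x - m - 1 := by omega
    have e2 : x - m = (x - m - 1) + 1 := by omega
    have e3 : k - m = (k - m - 1) + 1 := by omega
    have e4 : k - (m+1) = k - m - 1 := by omega
    have e5 : x - (m+1) = x - m - 1 := by omega
    rw [e1, e4, e5, e2, e3, Nat.choose_succ_succ]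
    push_cast
    ring

private lemma diff_gt (m : ℕ) : ∀ x k : ℕ, k < m → m ≤ x →
    ∑ i ∈ Finset.range (m+1), (-1:ℤ)^i * (m.choose i) * ((x-i).choose k) = 0 := by
  induction m with
  | zero => intro x k h; omega
  | succ m ih =>
    intro x k hk hx
    rw [rrec m x k]
    rcases Nat.lt_or_ge k m with h | h
    · rw [ih x k h (by omega), ih (x-1) k h (by omega)]; ring
    · have hkm : k = m := by omega
      subst hkm
      rw [diff_le k x k (by omega) le_rfl, diff_le k (x-1) k (by omega) le_rfl]
      simp

private lemma split2 (f : ℕ → ℤ) (n : ℕ) :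
    ∑ i ∈ Finset.range (2*n), f i
      = ∑ j ∈ Finset.range n, f (2*j) + ∑ j ∈ Finset.range n, f (2*j+1) := by
  induction n with
  | zero => simp
  | succ n ih =>
    have h : 2*(n+1) = 2*n + 1 + 1 := by ring
    rw [h, Finset.sum_range_succ, Finset.sum_range_succ,
      Finset.sum_range_succ (fun j => f (2*j)), Finset.sum_range_succ (fun j => f (2*j+1)), ih]
    ring

theorem sum_choose_eq_sum_choose (n k : ℕ) (hk : k ≤ n) :
    ∑ j ∈ Finset.Icc k n, (n + 1).choose (2 * n - 2 * j) * (2 * j + 1 - k).choose k =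
      ∑ j ∈ Finset.Icc k n, (n + 1).choose (2 * n - 2 * j + 1) * (2 * j - k).choose k := by
  set x := 2*n+1-k with hxdef
  set F : ℕ → ℤ := fun i => (-1:ℤ)^i * ((n+1).choose i) * ((x-i).choose k) with hF
  have h0 : ∑ i ∈ Finset.range (n+2), F i = 0 := diff_gt (n+1) x k (by omega) (by omega)
  have hext : ∑ i ∈ Finset.range (2*(n+1)), F i = 0 := by
    rw [← h0]
    symm
    apply Finset.sum_subset
    · exact Finset.range_subset_range.mpr (by omega)
    · intro i hi hni
      simp only [Finset.mem_range] at hi hni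
      have hz : (n+1).choose i = 0 := Nat.choose_eq_zero_of_lt (by omega)
      simp [hF, hz]
  rw [split2 F (n+1)] at hext
  rw [← Finset.sum_range_reflect (fun j => F (2*j)) (n+1),
      ← Finset.sum_range_reflect (fun j => F (2*j+1)) (n+1)] at hext
  simp only [Nat.add_sub_cancel] at hext
  have hA : ∀ j ∈ Finset.range (n+1),
      F (2*(n-j)) = (((n+1).choose (2*n-2*j) * (2*j+1-k).choose k : ℕ) : ℤ) := by
    intro j hj
    simp only [Finset.mem_range] at hj
    show (-1:ℤ)^(2*(n-j)) * ((n+1).choose (2*(n-j))) * ((x-(2*(n-j))).choose k) = _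
    have e3 : (-1:ℤ)^(2*(n-j)) = 1 := by rw [pow_mul]; norm_num
    have e1 : 2*(n-j) = 2*n - 2*j := by omega
    have e2 : x - (2*n - 2*j) = 2*j+1-k := by omega
    rw [e3, one_mul, e1, e2]
    push_cast
    ring
  have hB : ∀ j ∈ Finset.range (n+1),
      F (2*(n-j)+1) = -(((n+1).choose (2*n-2*j+1) * (2*j-k).choose k : ℕ) : ℤ) := by
    intro j hj
    simp only [Finset.mem_range] at hj
    show (-1:ℤ)^(2*(n-j)+1) * ((n+1).choose (2*(n-j)+1)) * ((x-(2*(n-j)+1)).choose k) = _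
    have e3 : (-1:ℤ)^(2*(n-j)+1) = -1 := by rw [pow_succ, pow_mul]; norm_num
    have e1 : 2*(n-j)+1 = 2*n - 2*j + 1 := by omega
    have e2 : x - (2*n - 2*j + 1) = 2*j-k := by omega
    rw [e3, e1, e2]
    push_cast
    ring
  rw [Finset.sum_congr rfl hA, Finset.sum_congr rfl hB, Finset.sum_neg_distrib] at hext
  have hIccA : ∑ j ∈ Finset.Icc k n, (((n+1).choose (2*n-2*j) * (2*j+1-k).choose k : ℕ) : ℤ)
      = ∑ j ∈ Finset.range (n+1), (((n+1).choose (2*n-2*j) * (2*j+1-k).choose k : ℕ) : ℤ) := by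
    apply Finset.sum_subset
    · intro j hj; simp only [Finset.mem_Icc] at hj; simp only [Finset.mem_range]; omega
    · intro j hj hnj
      simp only [Finset.mem_range] at hj
      simp only [Finset.mem_Icc, not_and, not_le] at hnj
      have hjk : j < k := by omega
      have hz : (2*j+1-k).choose k = 0 := Nat.choose_eq_zero_of_lt (by omega)
      simp [hz]
  have hIccB : ∑ j ∈ Finset.Icc k n, (((n+1).choose (2*n-2*j+1) * (2*j-k).choose k : ℕ) : ℤ)
      = ∑ j ∈ Finset.range (n+1), (((n+1).choose (2*n-2*j+1) * (2*j-k).choose k : ℕ) : ℤ) := by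
    apply Finset.sum_subset
    · intro j hj; simp only [Finset.mem_Icc] at hj; simp only [Finset.mem_range]; omega
    · intro j hj hnj
      simp only [Finset.mem_range] at hj
      simp only [Finset.mem_Icc, not_and, not_le] at hnj
      have hjk : j < k := by omega
      have hz : (2*j-k).choose k = 0 := Nat.choose_eq_zero_of_lt (by omega)
      simp [hz]
  have key : ∑ j ∈ Finset.Icc k n, (((n+1).choose (2*n-2*j) * (2*j+1-k).choose k : ℕ) : ℤ)
      = ∑ j ∈ Finset.Icc k n, (((n+1).choose (2*n-2*j+1) * (2*j-k).choose k : ℕ) : ℤ) := by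
    rw [hIccA, hIccB]; linarith
  exact_mod_cast key
end

section
/- Kaneko's identity: for all n ≥ 0, ∑_{i=0}^{n+1} C(n+1, i)·(n+i+1)·B_{n+i} = 0, where B_m are the Bernoulli numbers (with B_1 = -1/2). -/
open Finset

/-- Gessel's bilinear form. -/
def kanekoF (m n : ℕ) : ℚ := ∑ i ∈ range (m + 1), (m.choose i : ℚ) * bernoulli (n + i)

lemma kanekoF_zero (n : ℕ) : kanekoF 0 n = bernoulli n := by simp [kanekoF]

lemma kanekoF_succ (m n : ℕ) : kanekoF (m + 1) n = kanekoF m n + kanekoF m (n + 1) := by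
  unfold kanekoF
  rw [Finset.sum_range_succ' (fun i => ((m + 1).choose i : ℚ) * bernoulli (n + i)),
    Finset.sum_range_succ' (fun i => (m.choose i : ℚ) * bernoulli (n + i))]
  have h1 : ∀ i ∈ range (m + 1),
      ((m + 1).choose (i + 1) : ℚ) * bernoulli (n + (i + 1)) =
        (m.choose i : ℚ) * bernoulli (n + 1 + i) +
          (m.choose (i + 1) : ℚ) * bernoulli (n + (i + 1)) := by
    intro i _
    rw [Nat.choose_succ_succ]
    push_cast
    have : n + (i + 1) = n + 1 + i := by omega
    rw [this]; ring
  rw [Finset.sum_congr rfl h1, Finset.sum_add_distrib]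
  have h2 : ∑ i ∈ range (m + 1), (m.choose (i + 1) : ℚ) * bernoulli (n + (i + 1)) =
      ∑ i ∈ range m, (m.choose (i + 1) : ℚ) * bernoulli (n + (i + 1)) := by
    rw [Finset.sum_range_succ]; simp
  rw [h2]
  simp only [Nat.choose_zero_right]
  ring

lemma kanekoF_base (n : ℕ) : kanekoF n 0 = bernoulli n + if n = 1 then 1 else 0 := by
  unfold kanekoF
  rw [Finset.sum_range_succ]
  simp only [Nat.choose_self, Nat.cast_one, one_mul, Nat.zero_add]
  rw [sum_bernoulli]
  ring

lemma kanekoF_symm (m : ℕ) : ∀ n, kanekoF m n = (-1 : ℚ) ^ (m + n) * kanekoF n m := by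
  induction m with
  | zero =>
    intro n
    rw [kanekoF_zero, kanekoF_base, zero_add]
    rcases Nat.even_or_odd n with he | ho
    · rw [he.neg_one_pow]
      have : n ≠ 1 := by rintro rfl; exact (Nat.not_even_one) he
      simp [this]
    · by_cases h1 : n = 1
      · subst h1; norm_num
      · have hz : bernoulli n = 0 := by
          rw [bernoulli_eq_bernoulli'_of_ne_one h1]
          have hp := ho.pos
          exact bernoulli'_eq_zero_of_odd ho (by omega)
        simp [hz, h1]
  | succ m ih =>
    intro n
    rw [kanekoF_succ, ih n, ih (n + 1), kanekoF_succ n m]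
    have : (m + (n + 1)) = (m + n) + 1 := by omega
    rw [this]
    have : (m + 1 + n) = (m + n) + 1 := by omega
    rw [this, pow_succ]
    ring

/-- Kaneko's identity for Bernoulli numbers (with B₁ = -1/2). -/
theorem kaneko_identity (n : ℕ) :
    ∑ i ∈ Finset.range (n + 2), ((n + 1).choose i : ℚ) * (n + i + 1) * bernoulli (n + i) = 0 := by
  have key : kanekoF (n + 1) n + kanekoF n (n + 1) = 0 := by
    rw [kanekoF_symm (n + 1) n]
    have : n + 1 + n = 2 * n + 1 := by omega
    rw [this, pow_succ, pow_mul]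
    norm_num
  have split : ∀ i ∈ range (n + 2),
      ((n + 1).choose i : ℚ) * (n + i + 1) * bernoulli (n + i) =
        (n + 1) * ((n + 1).choose i : ℚ) * bernoulli (n + i) +
          (i * (n + 1).choose i : ℚ) * bernoulli (n + i) := by
    intro i _
    ring
  rw [Finset.sum_congr rfl split, Finset.sum_add_distrib]
  have h1 : ∑ i ∈ range (n + 2), (n + 1 : ℚ) * ((n + 1).choose i : ℚ) * bernoulli (n + i) =
      (n + 1) * kanekoF (n + 1) n := by
    rw [kanekoF, Finset.mul_sum]
    exact Finset.sum_congr rfl fun i _ => by ring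
  have h2 : ∑ i ∈ range (n + 2), ((i * (n + 1).choose i : ℕ) : ℚ) * bernoulli (n + i) =
      (n + 1) * kanekoF n (n + 1) := by
    rw [Finset.sum_range_succ' (fun i => ((i * (n + 1).choose i : ℕ) : ℚ) * bernoulli (n + i))]
    simp only [Nat.zero_mul, Nat.cast_zero, zero_mul, add_zero]
    rw [kanekoF, Finset.mul_sum]
    refine Finset.sum_congr rfl fun i _ => ?_
    have hc : (i + 1) * (n + 1).choose (i + 1) = (n + 1) * n.choose i := by
      rw [mul_comm, ← Nat.add_one_mul_choose_eq]
    rw [show (i + 1) * (n + 1).choose (i + 1) = (n + 1).choose (i + 1) * (i + 1) by ring] at hc ⊢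
    rw [mul_comm ((n+1).choose (i+1)) (i+1)] at hc ⊢
    rw [hc]
    push_cast
    have : n + (i + 1) = n + 1 + i := by omega
    rw [this]; ring
  have h2' : ∑ i ∈ range (n + 2), ((i : ℚ) * ((n + 1).choose i : ℚ)) * bernoulli (n + i) =
      (n + 1) * kanekoF n (n + 1) := by
    rw [← h2]; exact Finset.sum_congr rfl fun i _ => by push_cast; ring
  rw [h1, h2']
  rw [← mul_add, key, mul_zero]
end
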